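/- arXiv:2301.08793 — 2 statements merged into one kernel-verified Lean document; each statement's English description precedes it below -/
import Mathlib

section
/- For elements a, b of a left legal semigroup S, there exists a positive integer n with a^n b = a^{n+1} and b^n a = b^{n+1} if and only if a²b = a² and b²a = b². -/
/-! Left legality gives `a³ = a²`, so all powers `aᵏ` with `k ≥ 2` collapse to `a²`;
multiplying `aⁿ b = aⁿ⁺¹` on the left by `a` then yields `a² b = a²`, and conversely
`n = 2` works. -/

/-- `spow a k` is the `k`-th power of `a` in a semigroup, for `k ≥ 1`
(with `spow a 0` defined to be `a` as a junk value). -/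
def spow {S : Type*} [Semigroup S] (a : S) : ℕ → S
  | 0 => a
  | 1 => a
  | (n + 2) => a * spow a (n + 1)

section Semigroup

variable {S : Type*} [Semigroup S] {a b : S}

lemma spow_succ {n : ℕ} (hn : 1 ≤ n) : spow a (n + 1) = a * spow a n := by
  obtain ⟨m, rfl⟩ := Nat.exists_eq_add_of_le' hn
  rfl

lemma spow_add_two (haa : a * a * a = a * a) : ∀ n, spow a (n + 2) = a * a
  | 0 => rfl
  | n + 1 => by
    change a * spow a (n + 2) = a * a
    rw [spow_add_two haa n, ← mul_assoc, haa]

lemma mul_self_mul_eq_of_spow_mul_eq (haa : a * a * a = a * a) {n : ℕ} (hn : 1 ≤ n)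
    (h : spow a n * b = spow a (n + 1)) : a * a * b = a * a := by
  obtain ⟨m, rfl⟩ := Nat.exists_eq_add_of_le' hn
  calc a * a * b = spow a (m + 1 + 1) * b := by rw [← spow_add_two haa m]
    _ = a * (spow a (m + 1) * b) := by rw [spow_succ hn, mul_assoc]
    _ = spow a (m + 1 + 2) := by rw [h, ← spow_succ (by omega)]
    _ = a * a := spow_add_two haa (m + 1)

lemma spow_two_mul_eq_of_mul_self_mul_eq (haa : a * a * a = a * a) (h : a * a * b = a * a) :
    spow a 2 * b = spow a 3 := by
  rw [spow_add_two haa 0, spow_add_two haa 1, h]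

end Semigroup

/-- For elements a, b of a left legal semigroup, there is n ≥ 1
with a^n b = a^{n+1} and b^n a = b^{n+1} iff a²b = a² and b²a = b². -/
theorem stmt_14 {S : Type*} [Semigroup S]
    (hleg : ∀ a b : S, a * b * a = a * b) :
    ∀ a b : S,
      (∃ n : ℕ, 1 ≤ n ∧ spow a n * b = spow a (n + 1) ∧
        spow b n * a = spow b (n + 1)) ↔
      (a * a * b = a * a ∧ b * b * a = b * b) := by
  intro a b
  constructor
  · rintro ⟨n, hn, hab, hba⟩
    exact ⟨mul_self_mul_eq_of_spow_mul_eq (hleg a a) hn hab,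
      mul_self_mul_eq_of_spow_mul_eq (hleg b b) hn hba⟩
  · rintro ⟨hab, hba⟩
    exact ⟨2, one_le_two, spow_two_mul_eq_of_mul_self_mul_eq (hleg a a) hab,
      spow_two_mul_eq_of_mul_self_mul_eq (hleg b b) hba⟩
end

section
/- For a semigroup S, the following are equivalent: (a) S is left legal and satisfies a²b = a² for all a, b; (b) S² is a left zero semigroup. -/
/-! Both conditions are equivalent to the identity `a * b * c = a * b`. For (b) this is because
`e * f = e` for products `e = a * b`, `f` reduces to right multiplication by a single factor.
For (a), left legality makes every product `e = a * b` idempotent (`b * a * b = b * a`),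
and then `e * c = e * e * c = e * e = e`. -/

section

variable {S : Type*} [Semigroup S]

theorem mul_mul_self_of_leftLegal (legal : ∀ a b : S, a * b * a = a * b) (a b : S) :
    a * b * (a * b) = a * b :=
  calc a * b * (a * b) = a * (b * a * b) := by simp only [mul_assoc]
    _ = a * b * a := by rw [legal, mul_assoc]
    _ = a * b := legal a b

theorem mul_mul_eq_left_of_leftLegal (legal : ∀ a b : S, a * b * a = a * b)
    (sq_mul : ∀ a b : S, a * a * b = a * a) (a b c : S) : a * b * c = a * b :=
  calc a * b * c = a * b * (a * b) * c := by rw [mul_mul_self_of_leftLegal legal]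
    _ = a * b := by rw [sq_mul, mul_mul_self_of_leftLegal legal]

theorem mul_mul_eq_left_iff_sq_leftZero :
    (∀ a b c : S, a * b * c = a * b) ↔
      ∀ e f : S, (∃ a b : S, e = a * b) → (∃ a b : S, f = a * b) → e * f = e := by
  constructor
  · rintro h _ _ ⟨a, b, rfl⟩ ⟨c, d, rfl⟩
    rw [← mul_assoc, h, h]
  · intro h a b c
    have leftZero (x y : S) : a * b * (x * y) = a * b := h _ _ ⟨a, b, rfl⟩ ⟨x, y, rfl⟩
    calc a * b * c = a * b * (a * b) * c := by rw [leftZero]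
      _ = a * b := by rw [mul_assoc, leftZero]

end

/-- S is left legal with a²b = a² iff S² is a left zero
semigroup. -/
theorem stmt_16 {S : Type*} [Semigroup S] :
    ((∀ a b : S, a * b * a = a * b) ∧ (∀ a b : S, a * a * b = a * a)) ↔
    (∀ e f : S, (∃ a b : S, e = a * b) → (∃ a b : S, f = a * b) → e * f = e) := by
  rw [← mul_mul_eq_left_iff_sq_leftZero]
  exact ⟨fun ⟨legal, sq_mul⟩ ↦ mul_mul_eq_left_of_leftLegal legal sq_mul,
    fun h ↦ ⟨fun a b ↦ h a b a, fun a b ↦ h a a b⟩⟩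
end
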